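/- Let A and B be skew-Hermitian n×n complex matrices (Aᴴ = -A and Bᴴ = -B) with spectral norms ‖A‖₂ < π and ‖B‖₂ < π. If exp(A) = exp(B), then A = B. In other words, the matrix exponential is injective on the set of skew-Hermitian matrices of spectral norm strictly less than π. -/

import Mathlib

open Matrix

/-- The spectral norm (ℓ²→ℓ² operator norm, i.e. largest singular value) of a
complex square matrix. -/
noncomputable def matrixSpectralNorm {n : ℕ} (A : Matrix (Fin n) (Fin n) ℂ) : ℝ :=
  ‖Matrix.toEuclideanCLM (𝕜 := ℂ) A‖

open scoped Matrix.Norms.L2Operator in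
/-- The C⋆-algebra structure on square matrices arising from the ℓ²→ℓ² operator norm. -/
noncomputable instance matrixCStarAlgebra {n : ℕ} : CStarAlgebra (Matrix (Fin n) (Fin n) ℂ) :=
  { Matrix.instL2OpNormedRing, Matrix.instL2OpNormedAlgebra, Matrix.instCStarRing,
    (inferInstance : StarRing (Matrix (Fin n) (Fin n) ℂ)),
    (inferInstance : StarModule ℂ (Matrix (Fin n) (Fin n) ℂ)),
    (FiniteDimensional.complete ℂ (Matrix (Fin n) (Fin n) ℂ) : CompleteSpace _) with }

set_option maxHeartbeats 1000000 in
open scoped Matrix.Norms.L2Operator in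
lemma log_exp_eq_self {n : ℕ} (hn : 0 < n) (M : Matrix (Fin n) (Fin n) ℂ)
    (hM : Mᴴ = -M) (hMnorm : matrixSpectralNorm M < Real.pi) :
    cfc Complex.log (NormedSpace.exp M) = M := by
  haveI : Nonempty (Fin n) := ⟨⟨0, hn⟩⟩
  haveI : Nontrivial (Matrix (Fin n) (Fin n) ℂ) := Matrix.nonempty
  haveI hnM : IsStarNormal M := by
    constructor
    rw [Matrix.star_eq_conjTranspose, hM]
    simp [Commute, SemiconjBy]
  have hMn : ‖M‖ < Real.pi := hMnorm
  have hspec : ∀ z ∈ spectrum ℂ M, z.re = 0 ∧ |z.im| < Real.pi := by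
    intro z hz
    have hsa : _root_.IsSelfAdjoint (Complex.I • M) := by
      rw [_root_.IsSelfAdjoint, star_smul, Matrix.star_eq_conjTranspose, hM]
      simp [Complex.star_def, Complex.conj_I]
    constructor
    · have hmem : Complex.I * z ∈ spectrum ℂ (Complex.I • M) := by
        have := spectrum.unit_smul_eq_smul (R := ℂ) M (Units.mk0 Complex.I Complex.I_ne_zero)
        rw [Units.smul_def, Units.val_mk0] at this
        rw [this]
        exact ⟨z, hz, by simp [smul_eq_mul]⟩
      have h := hsa.mem_spectrum_eq_re hmem
      have him : (Complex.I * z).im = 0 := by rw [h]; simp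
      simpa using him
    · have h1 : ‖z‖ ≤ ‖M‖ := spectrum.norm_le_norm_of_mem hz
      have h2 : |z.im| ≤ ‖z‖ := Complex.abs_im_le_norm z
      linarith
  have hslit : ∀ z ∈ spectrum ℂ M, Complex.exp z ∈ Complex.slitPlane := by
    intro z hz
    obtain ⟨hre, him⟩ := hspec z hz
    rcases eq_or_ne z.im 0 with h0 | h0
    · left
      rw [Complex.exp_re, hre, h0]
      simp [Real.exp_zero]
    · right
      rw [Complex.exp_im]
      refine mul_ne_zero (Real.exp_ne_zero _) ?_
      intro hsin
      rcases Real.sin_eq_zero_iff.mp hsin with ⟨k, hk⟩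
      rcases eq_or_ne k 0 with rfl | hk0
      · simp at hk; exact h0 hk.symm
      · have hπ : (1 : ℝ) * Real.pi ≤ |z.im| := by
          rw [← hk, abs_mul, abs_of_pos Real.pi_pos]
          have h1k : (1 : ℝ) ≤ |(k : ℝ)| := by
            rw [← Int.cast_abs]
            exact_mod_cast Int.one_le_abs hk0
          nlinarith [Real.pi_pos]
        linarith
  have hexp : NormedSpace.exp M = cfc Complex.exp M :=
    (CFC.complex_exp_eq_normedSpace_exp (a := M)).symm
  rw [hexp, ← cfc_comp Complex.log Complex.exp M hnM
      (fun w hw => by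
        obtain ⟨z, hz, rfl⟩ := hw
        exact (continuousAt_clog (hslit z hz)).continuousWithinAt)
      Complex.continuous_exp.continuousOn]
  calc cfc (Complex.log ∘ Complex.exp) M
      = cfc (id : ℂ → ℂ) M := by
        apply cfc_congr
        intro z hz
        obtain ⟨hre, him⟩ := hspec z hz
        have h1 : -Real.pi < z.im := (abs_lt.mp him).1
        have h2 : z.im ≤ Real.pi := le_of_lt (abs_lt.mp him).2
        exact Complex.log_exp h1 h2
    _ = M := cfc_id ℂ M

/-- The matrix exponential is injective on skew-Hermitian matrices of spectral
norm strictly less than `π`: if `Aᴴ = -A`, `Bᴴ = -B`, `‖A‖₂ < π`, `‖B‖₂ < π`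
and `exp A = exp B`, then `A = B`. -/
theorem exp_injective_skewHermitian {n : ℕ}
    (A B : Matrix (Fin n) (Fin n) ℂ)
    (hA : Aᴴ = -A) (hB : Bᴴ = -B)
    (hAnorm : matrixSpectralNorm A < Real.pi) (hBnorm : matrixSpectralNorm B < Real.pi)
    (hexp : NormedSpace.exp A = NormedSpace.exp B) :
    A = B := by
  rcases Nat.eq_zero_or_pos n with rfl | hn
  · exact Subsingleton.elim A B
  · rw [← log_exp_eq_self hn A hA hAnorm, hexp, log_exp_eq_self hn B hB hBnorm]
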